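/- arXiv:2407.03088 — 2 statements merged into one kernel-verified Lean document; each statement's English description precedes it below -/
import Mathlib

section
/- Let m ≥ 2 be an integer and k ∈ (0,1). Then the PSD-rank of the m×m correlation B_m equals 2: the explicit 2×2 positive semidefinite matrices C_x = (1/(√2·m))·[[1, √k·e^{2πi(x−1)/m}], [√k·e^{−2πi(x−1)/m}, 1]] and D_y = (1/(√2·m))·[[1, −√k·e^{−2πi(y−1)/m}], [−√k·e^{2πi(y−1)/m}, 1]] satisfy tr(C_x D_y) = B_m(x,y) for all x,y, so rank_psd(B_m) ≤ 2, and since B_m has matrix rank at least 2, rank_psd(B_m) = 2. -/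
/-!
Each `C_x`, `D_y` is a positive multiple of `[[1, a], [ā, 1]]` with `|a| = √k ≤ 1`, which is
the Gram matrix `NᴴN` of `N = [[1, a], [0, √(1 - |a|²)]]` and hence positive semidefinite. The
trace of a product of two such matrices is `2 + 2 Re(a b̄)`; for the given phases
`a b̄ = -k e^{2πi(x+y)/m}`, which produces the cosine in `B_m(x, y)`. Conversely, a
factorization by `1 × 1` matrices makes every `2 × 2` minor vanish, whereas the minor on rows
`0, 1` and columns `0, m - 1` is `b₀² - b₁²` with `b₀ = (1 - k)/m² < b₁ = (1 - k cos(2π/m))/m²`.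
-/

open Matrix BigOperators Finset
open scoped Kronecker ComplexOrder

noncomputable section

/-- The effect of the depolarizing channel on a measurement effect (Heisenberg picture). -/
def noisyEffect {d : ℕ} (lam : ℝ) (E : Matrix (Fin d) (Fin d) ℂ) : Matrix (Fin d) (Fin d) ℂ :=
  ((1 - lam : ℝ) : ℂ) • E + ((lam : ℂ) * E.trace / (d : ℂ)) • (1 : Matrix (Fin d) (Fin d) ℂ)

/-- A POVM on ℂ^d with n outcomes. -/
def IsPOVM {d n : ℕ} (E : Fin n → Matrix (Fin d) (Fin d) ℂ) : Prop :=
  (∀ x, (E x).PosSemidef) ∧ ∑ x, E x = 1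

/-- P is generated with local dimension d under depolarizing noise of strength lam. -/
def GeneratesWithNoise {n : ℕ} (P : Matrix (Fin n) (Fin n) ℝ) (lam : ℝ) (d : ℕ) : Prop :=
  ∃ (σ : Matrix (Fin d × Fin d) (Fin d × Fin d) ℂ)
    (E F : Fin n → Matrix (Fin d) (Fin d) ℂ),
    σ.PosSemidef ∧ σ.trace = 1 ∧ IsPOVM E ∧ IsPOVM F ∧
    ∀ x y, (P x y : ℂ) =
      ((noisyEffect lam (E x) ⊗ₖ noisyEffect lam (F y)) * σ).trace

/-- The matrix P̂_λ^{s,t}. -/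
def Phat {n : ℕ} (P : Matrix (Fin n) (Fin n) ℝ) (lam : ℝ) (s t : Fin n → ℝ)
    (x y : Fin n) : ℝ :=
  P x y - lam * s x * (∑ a, P a y) - lam * t y * (∑ b, P x b) + lam ^ 2 * s x * t y

/-- Nonnegative rank. -/
def NonnegRank {m n : ℕ} (P : Matrix (Fin m) (Fin n) ℝ) : ℕ :=
  sInf {r : ℕ | ∃ (u : Fin r → Fin m → ℝ) (v : Fin r → Fin n → ℝ),
    (∀ i x, 0 ≤ u i x) ∧ (∀ i y, 0 ≤ v i y) ∧ ∀ x y, P x y = ∑ i, u i x * v i y}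

/-- PSD rank. -/
def PsdRank {m n : ℕ} (M : Matrix (Fin m) (Fin n) ℝ) : ℕ :=
  sInf {r : ℕ | ∃ (C : Fin m → Matrix (Fin r) (Fin r) ℂ)
    (D : Fin n → Matrix (Fin r) (Fin r) ℂ),
    (∀ x, (C x).PosSemidef) ∧ (∀ y, (D y).PosSemidef) ∧
    ∀ x y, (M x y : ℂ) = (C x * D y).trace}

def outerProj {α : Type*} [Fintype α] (ψ : α → ℂ) : Matrix α α ℂ :=
  Matrix.of fun i j => ψ i * (starRingEnd ℂ) (ψ j)

def qval (k : ℝ) : ℝ := 1 / (1 - k) - Real.sqrt (1 / (1 - k) ^ 2 - 1)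

def Bmat (m : ℕ) (k : ℝ) : Matrix (Fin m) (Fin m) ℝ :=
  Matrix.of fun x y =>
    (1 / (m : ℝ) ^ 2) * (1 - k * Real.cos (2 * Real.pi * ((x.val : ℝ) + (y.val : ℝ)) / m))

def Amat (m : ℕ) (k : ℝ) : Matrix (Fin (m + 1)) (Fin (m + 1)) ℝ :=
  Matrix.of fun x y =>
    if x.val = 0 then
      (if y.val = 0 then (1 - qval k) ^ 2 / 2 else qval k * (1 - qval k) / (2 * m))
    else if y.val = 0 then qval k * (1 - qval k) / (2 * m)
    else ((1 + (qval k) ^ 2) / 2) *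
      ((1 / (m : ℝ) ^ 2) *
        (1 - k * Real.cos (2 * Real.pi * (((x.val : ℝ) - 1) + ((y.val : ℝ) - 1)) / m)))

def IsElPsdFactorization {n : ℕ} (P : Matrix (Fin n) (Fin n) ℝ) (lam : ℝ) (r : ℕ)
    (C D : Fin n → Matrix (Fin r) (Fin r) ℂ) : Prop :=
  (∀ x, (C x).PosSemidef) ∧ (∀ y, (D y).PosSemidef) ∧
  (∀ x y, (P x y : ℂ) = (C x * D y).trace) ∧
  IsUnit (∑ k, C k) ∧ IsUnit (∑ k, D k) ∧
  (∀ x, (C x - (((lam : ℂ) / r) * (C x * (∑ k, C k)⁻¹).trace) • (∑ k, C k)).PosSemidef) ∧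
  (∀ y, (D y - (((lam : ℂ) / r) * (D y * (∑ k, D k)⁻¹).trace) • (∑ k, D k)).PosSemidef)

/-- The 2×2 matrix C_x of the PSD factorization of B_m (0-indexed). -/
def Cmat (m : ℕ) (k : ℝ) (x : Fin m) : Matrix (Fin 2) (Fin 2) ℂ :=
  (((Real.sqrt 2 * m)⁻¹ : ℝ) : ℂ) •
    !![1, (Real.sqrt k : ℂ) * Complex.exp (2 * Real.pi * Complex.I * (x.val : ℂ) / m);
       (Real.sqrt k : ℂ) * Complex.exp (-(2 * Real.pi * Complex.I * (x.val : ℂ) / m)), 1]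

/-- The 2×2 matrix D_y of the PSD factorization of B_m. -/
def Dmat (m : ℕ) (k : ℝ) (y : Fin m) : Matrix (Fin 2) (Fin 2) ℂ :=
  (((Real.sqrt 2 * m)⁻¹ : ℝ) : ℂ) •
    !![1, -((Real.sqrt k : ℂ) * Complex.exp (-(2 * Real.pi * Complex.I * (y.val : ℂ) / m)));
       -((Real.sqrt k : ℂ) * Complex.exp (2 * Real.pi * Complex.I * (y.val : ℂ) / m)), 1]


def unitDiagHerm (a : ℂ) : Matrix (Fin 2) (Fin 2) ℂ := !![1, a; star a, 1]

lemma unitDiagHerm_eq_conjTranspose_mul_self (a : ℂ) {s : ℝ}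
    (hs : s ^ 2 = 1 - Complex.normSq a) :
    unitDiagHerm a = (!![1, a; 0, (s : ℂ)])ᴴ * !![1, a; 0, (s : ℂ)] := by
  have hs' : starRingEnd ℂ a * a + (s : ℂ) * s = 1 := by
    rw [← Complex.normSq_eq_conj_mul_self, ← Complex.ofReal_mul, ← sq, hs]
    push_cast; ring
  ext i j
  fin_cases i <;> fin_cases j <;> simp [unitDiagHerm, Matrix.mul_apply, hs']

lemma unitDiagHerm_posSemidef {a : ℂ} (ha : ‖a‖ ≤ 1) : (unitDiagHerm a).PosSemidef := by
  have ha' : Complex.normSq a ≤ 1 := by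
    rw [Complex.normSq_eq_norm_sq]
    exact pow_le_one₀ (norm_nonneg a) ha
  rw [unitDiagHerm_eq_conjTranspose_mul_self a (Real.sq_sqrt (sub_nonneg.mpr ha'))]
  exact posSemidef_conjTranspose_mul_self _

lemma trace_unitDiagHerm_mul (a b : ℂ) :
    (unitDiagHerm a * unitDiagHerm b).trace = 2 + (a * star b + star a * b) := by
  simp [unitDiagHerm, Matrix.trace]
  ring

lemma star_exp_two_pi_I_mul_div (j n : ℕ) :
    star (Complex.exp (2 * Real.pi * Complex.I * j / n)) =
      Complex.exp (-(2 * Real.pi * Complex.I * j / n)) := by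
  rw [Complex.star_def, ← Complex.exp_conj]
  simp [map_ofNat, neg_div]

lemma norm_exp_two_pi_I_mul_div (j n : ℕ) :
    ‖Complex.exp (2 * Real.pi * Complex.I * j / n)‖ = 1 := by
  rw [show 2 * Real.pi * Complex.I * j / n = ((2 * Real.pi * j / n : ℝ) : ℂ) * Complex.I by
    push_cast; ring]
  exact Complex.norm_exp_ofReal_mul_I _

lemma Cmat_eq_smul_unitDiagHerm (m : ℕ) (k : ℝ) (x : Fin m) :
    Cmat m k x = (((Real.sqrt 2 * m)⁻¹ : ℝ) : ℂ) •
      unitDiagHerm (Real.sqrt k * Complex.exp (2 * Real.pi * Complex.I * (x.val : ℂ) / m)) := by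
  simp [Cmat, unitDiagHerm, star_exp_two_pi_I_mul_div]

lemma Dmat_eq_smul_unitDiagHerm (m : ℕ) (k : ℝ) (y : Fin m) :
    Dmat m k y = (((Real.sqrt 2 * m)⁻¹ : ℝ) : ℂ) •
      unitDiagHerm
        (-(Real.sqrt k * Complex.exp (-(2 * Real.pi * Complex.I * (y.val : ℂ) / m)))) := by
  simp [Dmat, unitDiagHerm, ← star_exp_two_pi_I_mul_div]

lemma Cmat_posSemidef (m : ℕ) {k : ℝ} (hk : k ≤ 1) (x : Fin m) : (Cmat m k x).PosSemidef := by
  rw [Cmat_eq_smul_unitDiagHerm]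
  refine (unitDiagHerm_posSemidef ?_).smul (Complex.zero_le_real.mpr (by positivity))
  simpa [norm_exp_two_pi_I_mul_div, abs_of_nonneg (Real.sqrt_nonneg k)] using
    Real.sqrt_le_one.mpr hk

lemma Dmat_posSemidef (m : ℕ) {k : ℝ} (hk : k ≤ 1) (y : Fin m) : (Dmat m k y).PosSemidef := by
  rw [Dmat_eq_smul_unitDiagHerm]
  refine (unitDiagHerm_posSemidef ?_).smul (Complex.zero_le_real.mpr (by positivity))
  simpa [← star_exp_two_pi_I_mul_div, norm_exp_two_pi_I_mul_div,
    abs_of_nonneg (Real.sqrt_nonneg k)] using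
    Real.sqrt_le_one.mpr hk

lemma Bmat_eq_trace_Cmat_mul_Dmat (m : ℕ) {k : ℝ} (hk : 0 ≤ k) (x y : Fin m) :
    (Bmat m k x y : ℂ) = (Cmat m k x * Dmat m k y).trace := by
  set θ : ℂ := 2 * Real.pi * ((x.val : ℂ) + y.val) / m
  set ex := Complex.exp (2 * Real.pi * Complex.I * (x.val : ℂ) / m)
  set ey := Complex.exp (2 * Real.pi * Complex.I * (y.val : ℂ) / m)
  have hcos : ex * ey + star ex * star ey = 2 * Complex.cos θ := by
    rw [star_exp_two_pi_I_mul_div, star_exp_two_pi_I_mul_div, ← Complex.exp_add,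
      ← Complex.exp_add, Complex.two_cos]
    congr 2 <;> ring
  have hk' : (Real.sqrt k : ℂ) ^ 2 = k := by
    rw [← Complex.ofReal_pow, Real.sq_sqrt hk]
  have hoff : (Real.sqrt k * ex) * star (-(Real.sqrt k * star ey)) +
      star (Real.sqrt k * ex : ℂ) * (-(Real.sqrt k * star ey)) = -(2 * k * Complex.cos θ) := by
    have hsk : star (Real.sqrt k : ℂ) = Real.sqrt k := Complex.conj_ofReal _
    simp only [star_neg, star_mul', star_star, hsk]
    linear_combination (-(k : ℂ)) * hcos - (ex * ey + star ex * star ey) * hk'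
  have h2 : ((Real.sqrt 2 : ℂ)⁻¹) ^ 2 = 2⁻¹ := by
    rw [← Complex.ofReal_inv, ← Complex.ofReal_pow, inv_pow, Real.sq_sqrt zero_le_two]
    norm_num
  rw [Cmat_eq_smul_unitDiagHerm, Dmat_eq_smul_unitDiagHerm, ← star_exp_two_pi_I_mul_div,
    Matrix.smul_mul, Matrix.mul_smul, Matrix.trace_smul, Matrix.trace_smul,
    trace_unitDiagHerm_mul, hoff]
  simp only [smul_eq_mul, Bmat, Matrix.of_apply]
  push_cast
  linear_combination -(2 - 2 * k * Complex.cos θ) * (m : ℂ)⁻¹ ^ 2 * h2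

lemma trace_mul_cross_eq_of_le_one {ι κ : Type*} {r : ℕ} (hr : r ≤ 1)
    (C : ι → Matrix (Fin r) (Fin r) ℂ) (D : κ → Matrix (Fin r) (Fin r) ℂ)
    (x x' : ι) (y y' : κ) :
    (C x * D y).trace * (C x' * D y').trace = (C x * D y').trace * (C x' * D y).trace := by
  interval_cases r
  · simp [Matrix.trace]
  · simp [Matrix.trace, Matrix.mul_apply]
    ring

lemma cos_two_pi_div_lt_one {m : ℕ} (hm : 2 ≤ m) : Real.cos (2 * Real.pi / m) < 1 := by
  have hm' : (2 : ℝ) ≤ m := by exact_mod_cast hm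
  rw [← Real.cos_zero]
  refine Real.cos_lt_cos_of_nonneg_of_le_pi le_rfl ?_ (by positivity)
  rw [div_le_iff₀ (by positivity)]
  nlinarith [Real.pi_pos]

lemma Bmat_minor_lt {m : ℕ} (hm : 2 ≤ m) {k : ℝ} (hk0 : 0 < k) (hk1 : k < 1) :
    Bmat m k ⟨0, by omega⟩ ⟨0, by omega⟩ * Bmat m k ⟨1, by omega⟩ ⟨m - 1, by omega⟩ <
      Bmat m k ⟨0, by omega⟩ ⟨m - 1, by omega⟩ *
        Bmat m k ⟨1, by omega⟩ ⟨0, by omega⟩ := by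
  have hm0 : (m : ℝ) ≠ 0 := by positivity
  have hcast : ((m - 1 : ℕ) : ℝ) = m - 1 := by
    push_cast [Nat.cast_sub (by omega : 1 ≤ m)]; ring
  set b₀ := (1 - k) / (m : ℝ) ^ 2
  set b₁ := (1 - k * Real.cos (2 * Real.pi / m)) / (m : ℝ) ^ 2
  have h00 : Bmat m k ⟨0, by omega⟩ ⟨0, by omega⟩ = b₀ := by
    simp [Bmat, b₀]; ring
  have h1m : Bmat m k ⟨1, by omega⟩ ⟨m - 1, by omega⟩ = b₀ := by
    have harg : 2 * Real.pi * ((1 : ℝ) + ((m - 1 : ℕ) : ℝ)) / m = 2 * Real.pi := by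
      rw [hcast]; field_simp; ring
    simp only [Bmat, Matrix.of_apply, Nat.cast_one, harg, Real.cos_two_pi, b₀]; ring
  have h0m : Bmat m k ⟨0, by omega⟩ ⟨m - 1, by omega⟩ = b₁ := by
    have harg : 2 * Real.pi * ((0 : ℝ) + ((m - 1 : ℕ) : ℝ)) / m =
        2 * Real.pi - 2 * Real.pi / m := by
      rw [hcast]; field_simp; ring
    simp only [Bmat, Matrix.of_apply, Nat.cast_zero, harg, Real.cos_two_pi_sub, b₁]; ring
  have h10 : Bmat m k ⟨1, by omega⟩ ⟨0, by omega⟩ = b₁ := by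
    simp [Bmat, b₁]; ring
  rw [h00, h1m, h0m, h10]
  have hcos := cos_two_pi_div_lt_one hm
  have hb : b₀ < b₁ := div_lt_div_of_pos_right (by nlinarith) (by positivity)
  exact mul_self_lt_mul_self (div_pos (by linarith) (by positivity)).le hb

lemma two_le_of_Bmat_eq_trace {m : ℕ} (hm : 2 ≤ m) {k : ℝ} (hk0 : 0 < k) (hk1 : k < 1)
    {r : ℕ} (C D : Fin m → Matrix (Fin r) (Fin r) ℂ)
    (h : ∀ x y, (Bmat m k x y : ℂ) = (C x * D y).trace) : 2 ≤ r := by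
  by_contra! hr
  have hcross := trace_mul_cross_eq_of_le_one (by omega) C D
    ⟨0, by omega⟩ ⟨1, by omega⟩ ⟨0, by omega⟩ ⟨m - 1, by omega⟩
  simp only [← h] at hcross
  exact (Bmat_minor_lt hm hk0 hk1).ne (by exact_mod_cast hcross)

/-- the PSD-rank of B_m equals 2, witnessed by the explicit PSD matrices
C_x, D_y with tr(C_x D_y) = B_m(x,y). -/
theorem Bmat_psdRank_eq_two
    (m : ℕ) (hm : 2 ≤ m) (k : ℝ) (hk0 : 0 < k) (hk1 : k < 1) :
    (∀ x, (Cmat m k x).PosSemidef) ∧ (∀ y, (Dmat m k y).PosSemidef) ∧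
    (∀ x y, ((Bmat m k x y : ℝ) : ℂ) = (Cmat m k x * Dmat m k y).trace) ∧
    PsdRank (Bmat m k) = 2 := by
  have hC := Cmat_posSemidef m hk1.le
  have hD := Dmat_posSemidef m hk1.le
  have htr := Bmat_eq_trace_Cmat_mul_Dmat m hk0.le
  refine ⟨hC, hD, htr, IsLeast.csInf_eq ⟨⟨Cmat m k, Dmat m k, hC, hD, htr⟩, ?_⟩⟩
  rintro r ⟨C, D, -, -, h⟩
  exact two_le_of_Bmat_eq_trace hm hk0 hk1 C D h

end
end

section
/- Fix k ∈ (0,1), an integer m ≥ 1, let q = 1/(1−k) − √(1/(1−k)² − 1) ∈ (0,1), and let A_m be the (m+1)×(m+1) correlation defined from B_m. Then rank_psd(A_m) ≤ 3: explicitly, with the 2×2 matrices C_x, D_y giving a size-2 PSD factorization of B_m, the 3×3 positive semidefinite matrices C'_1 = D'_1 = ((1−q)/(2√(1+q²)))·diag(√2, q, q), C'_x = √((1+q²)/2)·(0 ⊕ C_{x−1}) and D'_y = √((1+q²)/2)·(0 ⊕ D_{y−1}) for 2 ≤ x,y ≤ m+1 satisfy tr(C'_x D'_y) = A_m(x,y)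 for all x, y ∈ {1,…,m+1}. -/
/-! Each 2×2 factor `C_x`, `D_y` is a positive multiple of a Hermitian matrix `[[1, u], [ū, 1]]`
with `|u| = √k ≤ 1`. Such a matrix is `(1 - |u|) I` plus `|u|` times a rank-one PSD matrix, hence
PSD, and the trace of a product of two of them is `2 + 2 Re (u v̄)`, which produces the cosine in
`B_m`. In the 3×3 factorization `C'_1 = D'_1` is diagonal while all other factors vanish outside
the lower 2×2 block, so `tr (C'_x D'_y)` is `(1 + q²)/2 · tr (C_{x-1} D_{y-1})`, a weighted sum
of the diagonal entries `1/(√2 m)` of some `C` or `D`, or the trace of a diagonal matrix. -/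

open Matrix BigOperators Finset
open scoped Kronecker ComplexOrder

noncomputable section

/-- The 2×2 matrix C_x of the PSD factorization of B_m, with 0-based index `j : ℕ`. -/
def Cent (m : ℕ) (k : ℝ) (j : ℕ) : Matrix (Fin 2) (Fin 2) ℂ :=
  (((Real.sqrt 2 * m)⁻¹ : ℝ) : ℂ) •
    !![1, (Real.sqrt k : ℂ) * Complex.exp (2 * Real.pi * Complex.I * (j : ℂ) / m);
       (Real.sqrt k : ℂ) * Complex.exp (-(2 * Real.pi * Complex.I * (j : ℂ) / m)), 1]

/-- The 2×2 matrix D_y of the PSD factorization of B_m, with 0-based index `j : ℕ`. -/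
def Dent (m : ℕ) (k : ℝ) (j : ℕ) : Matrix (Fin 2) (Fin 2) ℂ :=
  (((Real.sqrt 2 * m)⁻¹ : ℝ) : ℂ) •
    !![1, -((Real.sqrt k : ℂ) * Complex.exp (-(2 * Real.pi * Complex.I * (j : ℂ) / m)));
       -((Real.sqrt k : ℂ) * Complex.exp (2 * Real.pi * Complex.I * (j : ℂ) / m)), 1]

/-- Embedding of a 2×2 matrix into a 3×3 matrix as the lower-right block (0 ⊕ M). -/
def embed3 (M : Matrix (Fin 2) (Fin 2) ℂ) : Matrix (Fin 3) (Fin 3) ℂ :=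
  !![0, 0, 0;
     0, M 0 0, M 0 1;
     0, M 1 0, M 1 1]

/-- The 3×3 matrices C'_x of the size-3 PSD factorization of A_m. -/
def Cmat' (m : ℕ) (k : ℝ) (x : Fin (m + 1)) : Matrix (Fin 3) (Fin 3) ℂ :=
  if x.val = 0 then
    (((1 - qval k) / (2 * Real.sqrt (1 + (qval k) ^ 2)) : ℝ) : ℂ) •
      Matrix.diagonal ![(Real.sqrt 2 : ℂ), ((qval k : ℝ) : ℂ), ((qval k : ℝ) : ℂ)]
  else
    ((Real.sqrt ((1 + (qval k) ^ 2) / 2) : ℝ) : ℂ) • embed3 (Cent m k (x.val - 1))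

/-- The 3×3 matrices D'_y of the size-3 PSD factorization of A_m. -/
def Dmat' (m : ℕ) (k : ℝ) (y : Fin (m + 1)) : Matrix (Fin 3) (Fin 3) ℂ :=
  if y.val = 0 then
    (((1 - qval k) / (2 * Real.sqrt (1 + (qval k) ^ 2)) : ℝ) : ℂ) •
      Matrix.diagonal ![(Real.sqrt 2 : ℂ), ((qval k : ℝ) : ℂ), ((qval k : ℝ) : ℂ)]
  else
    ((Real.sqrt ((1 + (qval k) ^ 2) / 2) : ℝ) : ℂ) • embed3 (Dent m k (y.val - 1))


def hermUnitDiag (u : ℂ) : Matrix (Fin 2) (Fin 2) ℂ := !![1, u; star u, 1]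

lemma hermUnitDiag_eq_smul_one_add_vecMulVec (t : ℝ) {z : ℂ} (hz : star z * z = 1) :
    hermUnitDiag (t * z) =
      (1 - t) • (1 : Matrix (Fin 2) (Fin 2) ℂ) +
        t • vecMulVec ![1, star z] (star ![1, star z]) := by
  ext i j
  fin_cases i <;> fin_cases j <;> simp_all [hermUnitDiag, vecMulVec]

lemma hermUnitDiag_posSemidef {u : ℂ} (hu : ‖u‖ ≤ 1) : (hermUnitDiag u).PosSemidef := by
  have hz : star (Complex.exp (u.arg * Complex.I)) * Complex.exp (u.arg * Complex.I) = 1 := by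
    simp [← Complex.exp_conj, ← Complex.exp_add, Complex.conj_ofReal]
  rw [← Complex.norm_mul_exp_arg_mul_I u, hermUnitDiag_eq_smul_one_add_vecMulVec _ hz]
  exact (PosSemidef.one.smul (sub_nonneg.2 hu)).add
    ((posSemidef_vecMulVec_self_star _).smul (norm_nonneg u))

lemma trace_hermUnitDiag_mul (u v : ℂ) :
    (hermUnitDiag u * hermUnitDiag v).trace = 2 + ((2 * (u * star v).re : ℝ) : ℂ) := by
  rw [← Complex.add_conj, trace_fin_two]
  simp only [hermUnitDiag, RCLike.star_def, mul_apply, of_apply, cons_val', cons_val_fin_one,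
    cons_val_zero, cons_val_one, Fin.sum_univ_two, mul_one, map_mul, Complex.conj_conj]
  ring

lemma star_exp_angle (m j : ℕ) :
    star (Complex.exp (2 * Real.pi * Complex.I * (j : ℂ) / m)) =
      Complex.exp (-(2 * Real.pi * Complex.I * (j : ℂ) / m)) := by
  rw [Complex.star_def, ← Complex.exp_conj]
  congr 1
  simp only [map_div₀, map_mul, map_ofNat, Complex.conj_ofReal, Complex.conj_I, map_natCast]
  ring

lemma Cent_eq (m : ℕ) (k : ℝ) (j : ℕ) :
    Cent m k j = (((Real.sqrt 2 * m)⁻¹ : ℝ) : ℂ) •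
      hermUnitDiag (Real.sqrt k * Complex.exp (2 * Real.pi * Complex.I * (j : ℂ) / m)) := by
  simp only [Cent, hermUnitDiag, star_mul', Complex.star_def, Complex.conj_ofReal]
  rw [← Complex.star_def, star_exp_angle]

lemma Dent_eq (m : ℕ) (k : ℝ) (j : ℕ) :
    Dent m k j = (((Real.sqrt 2 * m)⁻¹ : ℝ) : ℂ) •
      hermUnitDiag (-(Real.sqrt k * Complex.exp (-(2 * Real.pi * Complex.I * (j : ℂ) / m)))) := by
  have h := congrArg star (star_exp_angle m j)
  rw [star_star] at h
  simp only [Dent, hermUnitDiag, star_neg, star_mul', ← h, Complex.star_def, Complex.conj_ofReal]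

lemma Cent_posSemidef {k : ℝ} (hk : k ≤ 1) (m j : ℕ) : (Cent m k j).PosSemidef := by
  rw [Cent_eq]
  refine (hermUnitDiag_posSemidef ?_).smul (Complex.zero_le_real.mpr (by positivity))
  simpa [Complex.norm_exp, abs_of_nonneg (Real.sqrt_nonneg k), Real.sqrt_le_one] using hk

lemma Dent_posSemidef {k : ℝ} (hk : k ≤ 1) (m j : ℕ) : (Dent m k j).PosSemidef := by
  rw [Dent_eq]
  refine (hermUnitDiag_posSemidef ?_).smul (Complex.zero_le_real.mpr (by positivity))
  simpa [Complex.norm_exp, abs_of_nonneg (Real.sqrt_nonneg k), Real.sqrt_le_one] using hk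

lemma trace_Cent_mul_Dent {k : ℝ} (hk : 0 ≤ k) {m : ℕ} (hm : m ≠ 0) (i j : ℕ) :
    (Cent m k i * Dent m k j).trace =
      ((1 / (m : ℝ) ^ 2 * (1 - k * Real.cos (2 * Real.pi * ((i : ℝ) + (j : ℝ)) / m)) : ℝ) : ℂ) := by
  have hθ (n : ℕ) :
      2 * Real.pi * Complex.I * (n : ℂ) / m = ((2 * Real.pi * n / m : ℝ) : ℂ) * Complex.I := by
    push_cast; ring
  have hre : ((Real.sqrt k : ℂ) * Complex.exp (2 * Real.pi * Complex.I * (i : ℂ) / m) *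
      star (-((Real.sqrt k : ℂ) * star (Complex.exp (2 * Real.pi * Complex.I * (j : ℂ) / m))))).re
      = -(k * Real.cos (2 * Real.pi * ((i : ℝ) + (j : ℝ)) / m)) := by
    rw [star_neg, star_mul', star_star, Complex.star_def, Complex.conj_ofReal, mul_neg,
      mul_mul_mul_comm, ← Complex.exp_add, hθ, hθ, ← add_mul, ← Complex.ofReal_add,
      ← Complex.ofReal_mul, Complex.neg_re, Complex.re_ofReal_mul, Complex.exp_ofReal_mul_I_re,
      Real.mul_self_sqrt hk]
    congr 3
    ring
  have hm' : (m : ℂ) ≠ 0 := Nat.cast_ne_zero.mpr hm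
  have h2 : (Real.sqrt 2 : ℂ) ^ 2 = 2 := by exact_mod_cast Real.sq_sqrt zero_le_two
  rw [Cent_eq, Dent_eq, Matrix.smul_mul, Matrix.mul_smul, trace_smul, trace_smul,
    trace_hermUnitDiag_mul, ← star_exp_angle, hre, smul_eq_mul, smul_eq_mul]
  push_cast
  field_simp
  rw [h2]
  ring

lemma embed3_eq_conj (M : Matrix (Fin 2) (Fin 2) ℂ) :
    embed3 M = !![(0 : ℂ), 0; 1, 0; 0, 1] * M * !![(0 : ℂ), 0; 1, 0; 0, 1]ᴴ := by
  ext i j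
  fin_cases i <;> fin_cases j <;>
    simp [embed3, Matrix.mul_apply, vecMul, dotProduct, Fin.sum_univ_two]

lemma Matrix.PosSemidef.embed3 {M : Matrix (Fin 2) (Fin 2) ℂ} (hM : M.PosSemidef) :
    (embed3 M).PosSemidef := by
  rw [embed3_eq_conj]
  exact hM.mul_mul_conjTranspose_same _

lemma trace_embed3_mul_embed3 (M N : Matrix (Fin 2) (Fin 2) ℂ) :
    (embed3 M * embed3 N).trace = (M * N).trace := by
  simp [embed3, trace_fin_three, trace_fin_two, Matrix.mul_apply, Fin.sum_univ_two]

lemma trace_diagonal_mul_embed3 (v : Fin 3 → ℂ) (M : Matrix (Fin 2) (Fin 2) ℂ) :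
    (diagonal v * embed3 M).trace = v 1 * M 0 0 + v 2 * M 1 1 := by
  simp [embed3, trace_fin_three, Matrix.mul_apply, diagonal]

lemma sub_sqrt_sq_sub_one_mem_Icc {a : ℝ} (ha : 1 ≤ a) :
    a - Real.sqrt (a ^ 2 - 1) ∈ Set.Icc 0 1 := by
  have hle : Real.sqrt (a ^ 2 - 1) ≤ a := Real.sqrt_le_iff.mpr ⟨by linarith, by linarith⟩
  have hge : a - 1 ≤ Real.sqrt (a ^ 2 - 1) := Real.le_sqrt_of_sq_le (by nlinarith)
  exact ⟨by linarith, by linarith⟩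

lemma qval_mem_Icc {k : ℝ} (hk0 : 0 ≤ k) (hk1 : k < 1) : qval k ∈ Set.Icc 0 1 := by
  have ha : 1 ≤ 1 / (1 - k) := by rw [le_div_iff₀ (by linarith)]; linarith
  rw [qval, ← _root_.one_div_pow]
  exact sub_sqrt_sq_sub_one_mem_Icc ha

def cornerMat (q : ℝ) : Matrix (Fin 3) (Fin 3) ℂ :=
  (((1 - q) / (2 * Real.sqrt (1 + q ^ 2)) : ℝ) : ℂ) •
    diagonal ![(Real.sqrt 2 : ℂ), ((q : ℝ) : ℂ), ((q : ℝ) : ℂ)]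

lemma cornerMat_posSemidef {q : ℝ} (hq : q ∈ Set.Icc 0 1) : (cornerMat q).PosSemidef := by
  have hc : 0 ≤ (1 - q) / (2 * Real.sqrt (1 + q ^ 2)) :=
    div_nonneg (by linarith [hq.2]) (by positivity)
  refine PosSemidef.smul (posSemidef_diagonal_iff.mpr fun i => ?_) (Complex.zero_le_real.mpr hc)
  fin_cases i <;> simp [Complex.zero_le_real, hq.1]

lemma trace_cornerMat_mul_self (q : ℝ) :
    (cornerMat q * cornerMat q).trace = (((1 - q) ^ 2 / 2 : ℝ) : ℂ) := by
  have hs : (Real.sqrt (1 + q ^ 2) : ℂ) ^ 2 = 1 + q ^ 2 := by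
    exact_mod_cast Real.sq_sqrt (by positivity)
  have hs0 : (Real.sqrt (1 + q ^ 2) : ℂ) ≠ 0 := by
    exact_mod_cast (Real.sqrt_pos.mpr (by positivity)).ne'
  have h2 : (Real.sqrt 2 : ℂ) ^ 2 = 2 := by exact_mod_cast Real.sq_sqrt zero_le_two
  simp only [cornerMat, Matrix.smul_mul, Matrix.mul_smul, trace_smul, diagonal_mul_diagonal,
    trace_diagonal, Fin.sum_univ_three, smul_eq_mul, cons_val_zero, cons_val_one, cons_val_two,
    Nat.succ_eq_add_one, Nat.reduceAdd, tail_cons, head_cons]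
  push_cast
  field_simp
  rw [hs, h2]
  ring

lemma trace_cornerMat_mul_embed3 (q : ℝ) {m : ℕ} (hm : m ≠ 0) (u : ℂ) :
    (cornerMat q * ((Real.sqrt ((1 + q ^ 2) / 2) : ℝ) : ℂ) •
      embed3 ((((Real.sqrt 2 * m)⁻¹ : ℝ) : ℂ) • hermUnitDiag u)).trace =
      ((q * (1 - q) / (2 * m) : ℝ) : ℂ) := by
  have hm' : (m : ℂ) ≠ 0 := Nat.cast_ne_zero.mpr hm
  have h2 : (Real.sqrt 2 : ℂ) ^ 2 = 2 := by exact_mod_cast Real.sq_sqrt zero_le_two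
  have hs : (Real.sqrt ((1 + q ^ 2) / 2) : ℂ) * Real.sqrt 2 = Real.sqrt (1 + q ^ 2) := by
    rw [← Complex.ofReal_mul, ← Real.sqrt_mul (by positivity), div_mul_cancel₀ _ two_ne_zero]
  rw [cornerMat, Matrix.smul_mul, Matrix.mul_smul, trace_smul, trace_smul,
    trace_diagonal_mul_embed3]
  simp only [hermUnitDiag, Matrix.smul_apply, of_apply, cons_val', cons_val_zero, cons_val_one,
    cons_val_fin_one, smul_eq_mul, mul_one]
  push_cast
  field_simp
  linear_combination q * (1 - q) * (Real.sqrt 2 * hs - Real.sqrt ((1 + q ^ 2) / 2) * h2)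

lemma Cmat'_posSemidef {k : ℝ} (hk0 : 0 ≤ k) (hk1 : k < 1) (m : ℕ) (x : Fin (m + 1)) :
    (Cmat' m k x).PosSemidef := by
  unfold Cmat'
  split_ifs
  · exact cornerMat_posSemidef (qval_mem_Icc hk0 hk1)
  · exact (Cent_posSemidef hk1.le _ _).embed3.smul (Complex.zero_le_real.mpr (Real.sqrt_nonneg _))

lemma Dmat'_posSemidef {k : ℝ} (hk0 : 0 ≤ k) (hk1 : k < 1) (m : ℕ) (y : Fin (m + 1)) :
    (Dmat' m k y).PosSemidef := by
  unfold Dmat'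
  split_ifs
  · exact cornerMat_posSemidef (qval_mem_Icc hk0 hk1)
  · exact (Dent_posSemidef hk1.le _ _).embed3.smul (Complex.zero_le_real.mpr (Real.sqrt_nonneg _))

lemma Amat_eq_trace {k : ℝ} (hk : 0 ≤ k) (m : ℕ) (x y : Fin (m + 1)) :
    ((Amat m k x y : ℝ) : ℂ) = (Cmat' m k x * Dmat' m k y).trace := by
  have hm (z : Fin (m + 1)) (hz : z.val ≠ 0) : m ≠ 0 := by have := z.isLt; omega
  by_cases hx : x.val = 0 <;> by_cases hy : y.val = 0 <;>
    simp only [Amat, Cmat', Dmat', of_apply, hx, hy, ↓reduceIte]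
  · exact (trace_cornerMat_mul_self _).symm
  · rw [Dent_eq]
    exact (trace_cornerMat_mul_embed3 _ (hm y hy) _).symm
  · rw [trace_mul_comm, Cent_eq]
    exact (trace_cornerMat_mul_embed3 _ (hm x hx) _).symm
  · rw [Matrix.smul_mul, Matrix.mul_smul, trace_smul, trace_smul, trace_embed3_mul_embed3,
      trace_Cent_mul_Dent hk (hm x hx), Nat.cast_pred (Nat.pos_of_ne_zero hx),
      Nat.cast_pred (Nat.pos_of_ne_zero hy), smul_smul, ← Complex.ofReal_mul,
      Real.mul_self_sqrt (by positivity), smul_eq_mul, ← Complex.ofReal_mul]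

lemma psdRank_le_of_factorization {m n r : ℕ} {M : Matrix (Fin m) (Fin n) ℝ}
    {C : Fin m → Matrix (Fin r) (Fin r) ℂ} {D : Fin n → Matrix (Fin r) (Fin r) ℂ}
    (hC : ∀ x, (C x).PosSemidef) (hD : ∀ y, (D y).PosSemidef)
    (hM : ∀ x y, (M x y : ℂ) = (C x * D y).trace) : PsdRank M ≤ r :=
  Nat.sInf_le ⟨C, D, hC, hD, hM⟩

theorem Amat_psdRank_le_three_general
    (k : ℝ) (hk0 : 0 < k) (hk1 : k < 1) (m : ℕ) :
    (∀ x, (Cmat' m k x).PosSemidef) ∧ (∀ y, (Dmat' m k y).PosSemidef) ∧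
    (∀ x y, ((Amat m k x y : ℝ) : ℂ) = (Cmat' m k x * Dmat' m k y).trace) ∧
    PsdRank (Amat m k) ≤ 3 := by
  have hC := Cmat'_posSemidef hk0.le hk1 m
  have hD := Dmat'_posSemidef hk0.le hk1 m
  have hA := Amat_eq_trace hk0.le m
  exact ⟨hC, hD, hA, psdRank_le_of_factorization hC hD hA⟩

/-- the explicit 3×3 PSD matrices C'_x, D'_y give a size-3 PSD
factorization of A_m, so rank_psd(A_m) ≤ 3. -/
theorem Amat_psdRank_le_three
    (k : ℝ) (hk0 : 0 < k) (hk1 : k < 1) (m : ℕ) (hm : 1 ≤ m) :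
    (∀ x, (Cmat' m k x).PosSemidef) ∧ (∀ y, (Dmat' m k y).PosSemidef) ∧
    (∀ x y, ((Amat m k x y : ℝ) : ℂ) = (Cmat' m k x * Dmat' m k y).trace) ∧
    PsdRank (Amat m k) ≤ 3 :=
  Amat_psdRank_le_three_general k hk0 hk1 m

end
end
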